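/- Let A be Bernoulli(π) independent of X, E(X)=0, Σ = E(XXᵀ) positive definite. Consider the interaction-only model with γ₁ = 0, δ₁ = Σ⁻¹E(XY | A=1), versus the ANOVA model with γ₂ = δ₂ = 0. Then π²(1−π)²(V₂ − V₁) = E[(A−π)²(Aδ₁ᵀX)²] ≥ 0, i.e., the model with only treatment-covariate interactions (and known E(X)=0) uniformly dominates ANOVA. -/

import Mathlib

open MeasureTheory ProbabilityTheory Matrix

/-!
Write `T = δ₁ᵀX`, so that `ε₂ = ε₁ + A T`. Expanding the square, `V₂ - V₁` (up to the factor
`π²(1-π)²`) is `E[(A-π)²(A T)²]` plus twice the cross term `E[(A-π)² ε₁ A T]`. Since `A ∈ {0,1}`,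
`(A-π)² A = (1-π)² A`, so the cross term is a multiple of `∑ⱼ δ₁ⱼ E[ε₁ A Xⱼ]`, and each
`E[ε₁ A Xⱼ]` vanishes: this is the first-order condition of the interaction-only fit in `δ`, which
follows from `δ₁ = Σ⁻¹ E[XYA]/π`, the independence of `A` and `X`, and `E X = 0`.
-/

section

variable {Ω : Type*} [MeasurableSpace Ω] {μ : Measure Ω} {ι : Type*} [Fintype ι]
  {X : Ω → ι → ℝ} {A ε : Ω → ℝ} {π : ℝ}

lemma memLp_top_of_forall_eq_zero_or_one (hA : AEStronglyMeasurable A μ)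
    (hA01 : ∀ ω, A ω = 0 ∨ A ω = 1) : MemLp A ⊤ μ :=
  memLp_top_of_bound hA 1 (ae_of_all _ fun ω => by rcases hA01 ω with h | h <;> simp [h])

lemma memLp_dotProduct {q : ENNReal} (hX : ∀ i, MemLp (fun ω => X ω i) q μ)
    (δ : ι → ℝ) : MemLp (fun ω => δ ⬝ᵥ X ω) q μ :=
  memLp_finsetSum _ fun i _ => (hX i).const_mul (δ i)

lemma integral_mul_add_sq_of_integral_mul_mul_eq_zero {w e d : Ω → ℝ} (hw : MemLp w ⊤ μ)
    (he : MemLp e 2 μ) (hd : MemLp d 2 μ) (h : ∫ ω, w ω * (e ω * d ω) ∂μ = 0) :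
    ∫ ω, w ω * (e ω + d ω) ^ 2 ∂μ = ∫ ω, w ω * e ω ^ 2 ∂μ + ∫ ω, w ω * d ω ^ 2 ∂μ := by
  have hee : Integrable (fun ω => w ω * e ω ^ 2) μ := he.integrable_sq.mul_of_top_right hw
  have hed : Integrable (fun ω => 2 * (w ω * (e ω * d ω))) μ :=
    ((he.integrable_mul hd).mul_of_top_right hw).const_mul 2
  have hdd : Integrable (fun ω => w ω * d ω ^ 2) μ := hd.integrable_sq.mul_of_top_right hw
  calc ∫ ω, w ω * (e ω + d ω) ^ 2 ∂μ
      = ∫ ω, w ω * e ω ^ 2 + 2 * (w ω * (e ω * d ω)) + w ω * d ω ^ 2 ∂μ := by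
        congr with ω; ring
    _ = ∫ ω, w ω * e ω ^ 2 ∂μ + ∫ ω, w ω * d ω ^ 2 ∂μ := by
        rw [integral_add ?_ hdd, integral_add hee hed, integral_const_mul, h]
        · ring
        · exact hee.add hed

lemma integral_mul_dotProduct_eq_mulVec [IsFiniteMeasure μ]
    (hX : ∀ i, MemLp (fun ω => X ω i) 2 μ) {S : Matrix ι ι ℝ}
    (hS : ∀ i j, S i j = ∫ ω, X ω i * X ω j ∂μ) (δ : ι → ℝ) (i : ι) :
    ∫ ω, X ω i * (δ ⬝ᵥ X ω) ∂μ = (S *ᵥ δ) i := by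
  simp only [dotProduct, mulVec, Finset.mul_sum, hS]
  rw [integral_finsetSum _ fun j _ => ?_]
  · refine Finset.sum_congr rfl fun j _ => ?_
    rw [← integral_mul_const]
    congr with ω
    ring
  · exact (hX i).integrable_mul ((hX j).const_mul (δ j))

lemma integral_mul_mul_eq_zero_of_normal_eq [IsFiniteMeasure μ] {Y : Ω → ℝ} {a b : ℝ}
    {S : Matrix ι ι ℝ} {δ : ι → ℝ} (hA01 : ∀ ω, A ω = 0 ∨ A ω = 1) (hA : MemLp A ⊤ μ)
    (hAmean : ∫ ω, A ω ∂μ = π) (hindep : IndepFun A X μ) (hXmean : ∀ i, ∫ ω, X ω i ∂μ = 0)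
    (hY : MemLp Y 2 μ) (hX : ∀ i, MemLp (fun ω => X ω i) 2 μ)
    (hS : ∀ i j, S i j = ∫ ω, X ω i * X ω j ∂μ)
    (hδ : ∀ i, π * (S *ᵥ δ) i = ∫ ω, X ω i * Y ω * A ω ∂μ)
    (hε : ∀ ω, ε ω = Y ω - a - b * A ω - A ω * (δ ⬝ᵥ X ω)) (i : ι) :
    ∫ ω, ε ω * (A ω * X ω i) ∂μ = 0 := by
  have hAX : MemLp (fun ω => A ω * X ω i) 2 μ := (hX i).mul' hA
  have hXYA : Integrable (fun ω => X ω i * Y ω * A ω) μ :=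
    (hY.integrable_mul hAX).congr (ae_of_all _ fun ω => by simp only [Pi.mul_apply]; ring)
  have hXT : Integrable (fun ω => X ω i * (δ ⬝ᵥ X ω)) μ :=
    (hX i).integrable_mul (memLp_dotProduct hX δ)
  have hmul_indep {f : (ι → ℝ) → ℝ} (hf : Measurable f)
      (hfX : AEStronglyMeasurable (fun ω => f (X ω)) μ) :
      ∫ ω, A ω * f (X ω) ∂μ = π * ∫ ω, f (X ω) ∂μ := by
    rw [← hAmean]
    exact (hindep.comp measurable_id hf).integral_fun_mul_eq_mul_integral hA.1 hfX
  have hAX0 : ∫ ω, A ω * X ω i ∂μ = 0 := by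
    rw [hmul_indep (measurable_pi_apply i) (hX i).1, hXmean i, mul_zero]
  have hAXT : ∫ ω, A ω * (X ω i * (δ ⬝ᵥ X ω)) ∂μ = ∫ ω, X ω i * Y ω * A ω ∂μ := by
    rw [hmul_indep (f := fun x => x i * (δ ⬝ᵥ x)) (by fun_prop) hXT.1,
      integral_mul_dotProduct_eq_mulVec hX hS, hδ]
  have hexpand : ∀ ω, ε ω * (A ω * X ω i) = X ω i * Y ω * A ω - (a + b) * (A ω * X ω i)
      - A ω * (X ω i * (δ ⬝ᵥ X ω)) := by
    intro ω
    rw [hε]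
    rcases hA01 ω with h | h <;> rw [h] <;> ring
  simp_rw [hexpand]
  rw [integral_sub ?_ ?_, integral_sub hXYA ?_, integral_const_mul, hAX0, hAXT]
  · ring
  · exact (hAX.integrable one_le_two).const_mul _
  · exact hXYA.sub ((hAX.integrable one_le_two).const_mul _)
  · exact hXT.mul_of_top_right hA

lemma integral_sq_sub_mul_mul_dotProduct_eq_zero (hA01 : ∀ ω, A ω = 0 ∨ A ω = 1)
    (hA : MemLp A ⊤ μ) (hε : MemLp ε 2 μ) (hX : ∀ i, MemLp (fun ω => X ω i) 2 μ)
    (h : ∀ i, ∫ ω, ε ω * (A ω * X ω i) ∂μ = 0) (δ : ι → ℝ) :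
    ∫ ω, (A ω - π) ^ 2 * (ε ω * (A ω * (δ ⬝ᵥ X ω))) ∂μ = 0 := by
  have hexpand : ∀ ω, (A ω - π) ^ 2 * (ε ω * (A ω * (δ ⬝ᵥ X ω)))
      = ∑ i, (1 - π) ^ 2 * δ i * (ε ω * (A ω * X ω i)) := by
    intro ω
    simp only [dotProduct, Finset.mul_sum]
    refine Finset.sum_congr rfl fun i _ => ?_
    rcases hA01 ω with h | h <;> rw [h] <;> ring
  simp_rw [hexpand]
  rw [integral_finsetSum _ fun i _ => ?_]
  · simp only [integral_const_mul, h, mul_zero, Finset.sum_const_zero]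
  · exact (hε.integrable_mul ((hX i).mul' hA (r := 2))).const_mul _

end

theorem stmt_13_general {Ω : Type*} [MeasurableSpace Ω] (μ : Measure Ω) [IsProbabilityMeasure μ]
    {p : ℕ} (π : ℝ) (hπ0 : 0 < π)
    (A Y : Ω → ℝ) (X : Ω → Fin p → ℝ)
    (hA01 : ∀ ω, A ω = 0 ∨ A ω = 1)
    (hAmean : ∫ ω, A ω ∂μ = π)
    (hindep : IndepFun A X μ)
    (hXmean : ∀ j, ∫ ω, X ω j ∂μ = 0)
    (hY : MemLp Y 2 μ) (hXL2 : ∀ j, MemLp (fun ω => X ω j) 2 μ)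
    (S : Matrix (Fin p) (Fin p) ℝ)
    (hS : ∀ j k, S j k = ∫ ω, X ω j * X ω k ∂μ) (hSpd : S.PosDef)
    (α₁ β₁ : ℝ) (δ₁ : Fin p → ℝ)
    (hδ₁ : δ₁ = S⁻¹ *ᵥ (fun j => (∫ ω, X ω j * Y ω * A ω ∂μ) / π))
    (ε₁ ε₂ : Ω → ℝ)
    (hε₁ : ∀ ω, ε₁ ω = Y ω - α₁ - β₁ * A ω - A ω * ∑ j, δ₁ j * X ω j)
    (hε₂ : ∀ ω, ε₂ ω = ε₁ ω + A ω * ∑ j, δ₁ j * X ω j) :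
    (∫ ω, (A ω - π) ^ 2 * ε₂ ω ^ 2 ∂μ) - (∫ ω, (A ω - π) ^ 2 * ε₁ ω ^ 2 ∂μ)
      = ∫ ω, (A ω - π) ^ 2 * (A ω * ∑ j, δ₁ j * X ω j) ^ 2 ∂μ ∧
    ∫ ω, (A ω - π) ^ 2 * ε₁ ω ^ 2 ∂μ ≤ ∫ ω, (A ω - π) ^ 2 * ε₂ ω ^ 2 ∂μ := by
  simp only [← dotProduct.eq_1] at hε₁ hε₂ ⊢
  obtain rfl : ε₂ = fun ω => ε₁ ω + A ω * (δ₁ ⬝ᵥ X ω) := funext hε₂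
  have hA : MemLp A ⊤ μ := memLp_top_of_forall_eq_zero_or_one
    (Integrable.of_integral_ne_zero (hAmean ▸ hπ0.ne')).1 hA01
  have hnormal : ∀ j, π * (S *ᵥ δ₁) j = ∫ ω, X ω j * Y ω * A ω ∂μ := by
    intro j
    rw [hδ₁, mulVec_mulVec, mul_nonsing_inv _ (isUnit_iff_ne_zero.mpr hSpd.det_pos.ne'),
      one_mulVec]
    field_simp
  have hε₁L2 : MemLp ε₁ 2 μ := by
    rw [show ε₁ = _ from funext hε₁]
    exact ((hY.sub (memLp_const α₁)).sub ((hA.mono_exponent le_top).const_mul β₁)).sub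
      ((memLp_dotProduct hXL2 δ₁).mul' hA)
  have hcross := integral_sq_sub_mul_mul_dotProduct_eq_zero (π := π) hA01 hA hε₁L2 hXL2
    (integral_mul_mul_eq_zero_of_normal_eq hA01 hA hAmean hindep hXmean hY hXL2 hS hnormal hε₁)
    δ₁
  have hsplit := integral_mul_add_sq_of_integral_mul_mul_eq_zero
    (((hA.sub (memLp_top_const π)).mul' (hA.sub (memLp_top_const π))).ae_eq
      (ae_of_all _ fun ω => (sq (A ω - π)).symm))
    hε₁L2 ((memLp_dotProduct hXL2 δ₁).mul' hA) hcross
  rw [hsplit]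
  exact ⟨add_sub_cancel_left _ _, le_add_of_nonneg_right (integral_nonneg fun ω => by positivity)⟩

/-- interaction-only model vs ANOVA: with `δ₁ = Σ⁻¹ E(XY|A=1)` the
interaction-only coefficient, residual `ε₁ = Y - α₁ - β₁ A - A δ₁ᵀX` satisfying the
first-order conditions in the intercept and treatment, and ANOVA residual
`ε₂ = ε₁ + A δ₁ᵀX`, one has `π²(1-π)²(V₂ - V₁) = E[(A-π)²(Aδ₁ᵀX)²] ≥ 0`, i.e. the
interaction-only model (with known `E X = 0`) uniformly dominates ANOVA. -/
theorem stmt_13 {Ω : Type*} [MeasurableSpace Ω] (μ : Measure Ω) [IsProbabilityMeasure μ]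
    {p : ℕ} (π : ℝ) (hπ0 : 0 < π) (hπ1 : π < 1)
    (A Y : Ω → ℝ) (X : Ω → Fin p → ℝ)
    (hA01 : ∀ ω, A ω = 0 ∨ A ω = 1)
    (hAmean : ∫ ω, A ω ∂μ = π)
    (hindep : IndepFun A X μ)
    (hXmean : ∀ j, ∫ ω, X ω j ∂μ = 0)
    (hY : MemLp Y 2 μ) (hXL2 : ∀ j, MemLp (fun ω => X ω j) 2 μ)
    (S : Matrix (Fin p) (Fin p) ℝ)
    (hS : ∀ j k, S j k = ∫ ω, X ω j * X ω k ∂μ) (hSpd : S.PosDef)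
    (α₁ β₁ : ℝ) (δ₁ : Fin p → ℝ)
    (hδ₁ : δ₁ = S⁻¹ *ᵥ (fun j => (∫ ω, X ω j * Y ω * A ω ∂μ) / π))
    (ε₁ ε₂ : Ω → ℝ)
    (hε₁ : ∀ ω, ε₁ ω = Y ω - α₁ - β₁ * A ω - A ω * ∑ j, δ₁ j * X ω j)
    (h10 : ∫ ω, ε₁ ω ∂μ = 0) (h1A : ∫ ω, ε₁ ω * A ω ∂μ = 0)
    (hε₂ : ∀ ω, ε₂ ω = ε₁ ω + A ω * ∑ j, δ₁ j * X ω j) :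
    (∫ ω, (A ω - π) ^ 2 * ε₂ ω ^ 2 ∂μ) - (∫ ω, (A ω - π) ^ 2 * ε₁ ω ^ 2 ∂μ)
      = ∫ ω, (A ω - π) ^ 2 * (A ω * ∑ j, δ₁ j * X ω j) ^ 2 ∂μ ∧
    ∫ ω, (A ω - π) ^ 2 * ε₁ ω ^ 2 ∂μ ≤ ∫ ω, (A ω - π) ^ 2 * ε₂ ω ^ 2 ∂μ :=
  stmt_13_general μ π hπ0 A Y X hA01 hAmean hindep hXmean hY hXL2 S hS hSpd α₁ β₁ δ₁ hδ₁ ε₁ ε₂ hε₁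
    hε₂
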